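/- The shuffle map V_n: C₁^{⊗n} ⊗ C₂^{⊗n} → (C₁ ⊗ C₂)^{⊗n}, which interleaves the tensor factors with Koszul signs, is a chain map and is S_n-equivariant for the signed permutation actions on source and target. -/

import Mathlib

open scoped TensorProduct
open PiTensorProduct

/-- `(-1)^n` for an integer `n`, as an integer. -/
def sgn (n : ℤ) : ℤ := (((-1 : ℤˣ) ^ n : ℤˣ) : ℤ)

/-- The Koszul sign incurred by the shuffle `Vₙ` on elementary tensors: each `d_i` (degree
`dd i`) moves past the `c_j` (degree `dc j`) with `j > i`. -/
def shuffleSign (n : ℕ) (dc dd : Fin n → ℤ) : ℤ :=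
  ∑ i : Fin n, ∑ j : Fin n, if i < j then dd i * dc j else 0

/-- Koszul sign of the action of a permutation `σ` on an elementary tensor of homogeneous
elements of degrees `e`: the product of `(-1)^(e i · e j)` over inversions of `σ`. -/
def permSign (n : ℕ) (σ : Equiv.Perm (Fin n)) (e : Fin n → ℤ) : ℤ :=
  ∑ i : Fin n, ∑ j : Fin n, if i < j ∧ σ j < σ i then e i * e j else 0

/-
Every sign is a power of `-1`, so both identities only need the exponents to agree modulo 2.
Lowering the degree of `c k` (resp. `d k`) by one lowers the shuffle exponent by
`∑_{i<k} deg d_i` (resp. `∑_{j>k} deg c_j`), and this is exactly what reconciles the Koszul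
signs of the two differentials. For equivariance, the inversions of `σ` on the pairs `c_i ⊗ d_i`
contribute the inversions on the `c`'s and on the `d`'s plus the cross terms
`deg c_i · deg d_j + deg d_i · deg c_j`; modulo 2 these are exactly the change of the shuffle
exponent when the factors are reordered by `σ`.
-/

lemma sgn_add (a b : ℤ) : sgn (a + b) = sgn a * sgn b := by
  rw [sgn, sgn, sgn, zpow_add, Units.val_mul]

lemma sgn_eq_sgn_of_even_sub {a b : ℤ} (h : Even (a - b)) : sgn a = sgn b :=
  congrArg Units.val ((Int.negOnePow_eq_iff a b).2 h)

section Sums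

variable {ι : Type*} [Fintype ι] [LinearOrder ι]

lemma sum_ite_lt_add (f g : ι → ℤ) (k : ι) :
    (∑ l, if l < k then f l + g l else 0)
      = (∑ l, if l < k then f l else 0) + ∑ l, if l < k then g l else 0 := by
  simp only [← Finset.sum_filter, Finset.sum_add_distrib]

lemma sum_eq_sum_lt_add_add_sum_gt (f : ι → ℤ) (k : ι) :
    ∑ l, f l = (∑ l, if l < k then f l else 0) + f k + ∑ l, if k < l then f l else 0 := by
  rw [← Finset.sum_ite_eq' Finset.univ k f |>.trans (if_pos (Finset.mem_univ k)),
    ← Finset.sum_add_distrib, ← Finset.sum_add_distrib]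
  refine Finset.sum_congr rfl fun l _ => ?_
  rcases lt_trichotomy l k with h | rfl | h
  · simp [h, h.ne, h.not_gt]
  · simp
  · simp [h, h.ne', h.not_gt]

end Sums

lemma shuffleSign_update_left (n : ℕ) (dc dd : Fin n → ℤ) (k : Fin n) (a : ℤ) :
    shuffleSign n (Function.update dc k a) dd
      = shuffleSign n dc dd + (a - dc k) * ∑ i, if i < k then dd i else 0 := by
  have hupd : Function.update dc k a = fun j => dc j + if j = k then a - dc k else 0 := by
    ext j; rcases eq_or_ne j k with rfl | h <;> simp [*]
  simp only [shuffleSign, hupd, mul_add, ite_add_zero, Finset.sum_add_distrib, Finset.mul_sum]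
  congr 1
  refine Finset.sum_congr rfl fun i _ => ?_
  rw [Finset.sum_eq_single_of_mem k (Finset.mem_univ k) fun j _ hj => by simp [hj],
    if_pos (rfl : k = k)]
  split_ifs <;> ring

lemma shuffleSign_update_right (n : ℕ) (dc dd : Fin n → ℤ) (k : Fin n) (a : ℤ) :
    shuffleSign n dc (Function.update dd k a)
      = shuffleSign n dc dd + (a - dd k) * ∑ j, if k < j then dc j else 0 := by
  have hupd : Function.update dd k a = fun i => dd i + if i = k then a - dd k else 0 := by
    ext i; rcases eq_or_ne i k with rfl | h <;> simp [*]
  simp only [shuffleSign, hupd, add_mul, ite_add_zero, Finset.sum_add_distrib, Finset.mul_sum]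
  congr 1
  rw [Finset.sum_comm]
  refine Finset.sum_congr rfl fun j _ => ?_
  rw [Finset.sum_eq_single_of_mem k (Finset.mem_univ k) fun i _ hi => by simp [hi],
    if_pos (rfl : k = k)]
  split_ifs <;> ring

lemma sgn_mul_sgn_shuffleSign_update_left (n : ℕ) (dc dd : Fin n → ℤ) (k : Fin n) :
    sgn (∑ l, if l < k then dc l + dd l else 0) * sgn (shuffleSign n dc dd)
      = sgn (∑ l, if l < k then dc l else 0)
          * sgn (shuffleSign n (Function.update dc k (dc k - 1)) dd) := by
  rw [← sgn_add, ← sgn_add, shuffleSign_update_left, sum_ite_lt_add]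
  exact sgn_eq_sgn_of_even_sub ⟨∑ l, if l < k then dd l else 0, by ring⟩

lemma sgn_mul_sgn_shuffleSign_update_right (n : ℕ) (dc dd : Fin n → ℤ) (k : Fin n) :
    sgn (∑ l, if l < k then dc l + dd l else 0) * sgn (shuffleSign n dc dd) * sgn (dc k)
      = sgn (∑ l, dc l) * sgn (∑ l, if l < k then dd l else 0)
          * sgn (shuffleSign n dc (Function.update dd k (dd k - 1))) := by
  rw [← sgn_add, ← sgn_add, ← sgn_add, ← sgn_add, shuffleSign_update_right, sum_ite_lt_add,
    sum_eq_sum_lt_add_add_sum_gt dc k]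
  congr 1
  ring

lemma shuffleSign_comp_perm_inv (n : ℕ) (σ : Equiv.Perm (Fin n)) (dc dd : Fin n → ℤ) :
    shuffleSign n (fun i => dc (σ⁻¹ i)) (fun i => dd (σ⁻¹ i))
      = ∑ i, ∑ j, if σ i < σ j then dd i * dc j else 0 := by
  rw [shuffleSign, ← Equiv.sum_comp σ]
  refine Finset.sum_congr rfl fun i _ => ?_
  rw [← Equiv.sum_comp σ]
  simp

lemma permSign_add (n : ℕ) (σ : Equiv.Perm (Fin n)) (e f : Fin n → ℤ) :
    permSign n σ (fun i => e i + f i)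
      = permSign n σ e + permSign n σ f
          + ∑ i, ∑ j, if i < j ∧ σ j < σ i then e i * f j + f i * e j else 0 := by
  simp only [permSign, ← Finset.sum_add_distrib]
  refine Finset.sum_congr rfl fun i _ => Finset.sum_congr rfl fun j _ => ?_
  split_ifs <;> ring

lemma even_permSign_add_shuffleSign_sub (n : ℕ) (σ : Equiv.Perm (Fin n))
    (dc dd : Fin n → ℤ) :
    Even (permSign n σ (fun i => dc i + dd i) + shuffleSign n dc dd
      - (permSign n σ dc + permSign n σ dd
          + shuffleSign n (fun i => dc (σ⁻¹ i)) (fun i => dd (σ⁻¹ i)))) := by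
  have hswap : (∑ i, ∑ j, if i < j ∧ σ j < σ i then dc i * dd j else 0)
      = ∑ i, ∑ j, if j < i ∧ σ i < σ j then dd i * dc j else 0 := by
    rw [Finset.sum_comm]
    simp only [mul_comm]
  refine ⟨∑ i, ∑ j, if i < j ∧ σ j < σ i then dd i * dc j else 0, ?_⟩
  rw [permSign_add, shuffleSign_comp_perm_inv]
  simp only [ite_add_zero, Finset.sum_add_distrib, hswap]
  rw [sub_eq_iff_eq_add]
  simp only [shuffleSign, permSign, ← Finset.sum_add_distrib]
  refine Finset.sum_congr rfl fun i _ => Finset.sum_congr rfl fun j _ => ?_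
  rcases lt_trichotomy i j with h | rfl | h
  · rcases (σ.injective.ne h.ne).lt_or_gt with hσ | hσ <;>
      simp only [h, hσ, h.not_gt, hσ.not_gt, and_self, and_true, and_false, if_true, if_false] <;>
      ring
  · simp
  · rcases (σ.injective.ne h.ne').lt_or_gt with hσ | hσ <;>
      simp only [h, hσ, h.not_gt, hσ.not_gt, and_self, and_true, and_false, if_true, if_false] <;>
      ring

theorem stmt16_general (n : ℕ) {C₁ C₂ : Type*} [AddCommGroup C₁] [AddCommGroup C₂]
    [Module ℤ C₁] [Module ℤ C₂]
    (d₁ : C₁ →ₗ[ℤ] C₁) (d₂ : C₂ →ₗ[ℤ] C₂)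
    (c : Fin n → C₁) (dc : Fin n → ℤ)
    (d : Fin n → C₂) (dd : Fin n → ℤ) :
    -- (1) Vₙ is a chain map:  ∂(Vₙ(c ⊗ d)) = Vₙ(∂(c ⊗ d)) :
    ((∑ k : Fin n,
        (sgn (∑ l : Fin n, if l < k then dc l + dd l else 0) * sgn (shuffleSign n dc dd)) •
          (tprod ℤ (s := fun _ : Fin n => C₁ ⊗[ℤ] C₂))
            (Function.update (fun i => c i ⊗ₜ[ℤ] d i) k
              ((d₁ (c k)) ⊗ₜ[ℤ] (d k) + sgn (dc k) • ((c k) ⊗ₜ[ℤ] (d₂ (d k))))))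
      = (∑ k : Fin n,
          (sgn (∑ l : Fin n, if l < k then dc l else 0) *
              sgn (shuffleSign n (Function.update dc k (dc k - 1)) dd)) •
            (tprod ℤ (s := fun _ : Fin n => C₁ ⊗[ℤ] C₂))
              (Function.update (fun i => c i ⊗ₜ[ℤ] d i) k ((d₁ (c k)) ⊗ₜ[ℤ] (d k))))
        + ∑ k : Fin n,
            (sgn (∑ l : Fin n, dc l) * sgn (∑ l : Fin n, if l < k then dd l else 0) *
                sgn (shuffleSign n dc (Function.update dd k (dd k - 1)))) •
              (tprod ℤ (s := fun _ : Fin n => C₁ ⊗[ℤ] C₂))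
                (Function.update (fun i => c i ⊗ₜ[ℤ] d i) k ((c k) ⊗ₜ[ℤ] (d₂ (d k)))))
    -- (2) Vₙ is Sₙ-equivariant:  σ · Vₙ(c ⊗ d) = Vₙ(σ·c ⊗ σ·d) :
    ∧ (∀ σ : Equiv.Perm (Fin n),
        (sgn (permSign n σ (fun i => dc i + dd i)) * sgn (shuffleSign n dc dd)) •
            (tprod ℤ (s := fun _ : Fin n => C₁ ⊗[ℤ] C₂))
              (fun i => c (σ⁻¹ i) ⊗ₜ[ℤ] d (σ⁻¹ i))
          = (sgn (permSign n σ dc) * sgn (permSign n σ dd) *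
                sgn (∑ i : Fin n, ∑ j : Fin n, if i < j then dd (σ⁻¹ i) * dc (σ⁻¹ j) else 0)) •
              (tprod ℤ (s := fun _ : Fin n => C₁ ⊗[ℤ] C₂))
                (fun i => c (σ⁻¹ i) ⊗ₜ[ℤ] d (σ⁻¹ i))) := by
  refine ⟨?_, fun σ => ?_⟩
  · rw [← Finset.sum_add_distrib]
    refine Finset.sum_congr rfl fun k _ => ?_
    rw [MultilinearMap.map_update_add, MultilinearMap.map_update_smul, smul_add, smul_smul,
      sgn_mul_sgn_shuffleSign_update_right, sgn_mul_sgn_shuffleSign_update_left]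
  · congr 1
    simp only [← sgn_add]
    exact sgn_eq_sgn_of_even_sub (even_permSign_add_shuffleSign_sub n σ dc dd)

/-- The shuffle map `Vₙ : C₁^{⊗n} ⊗ C₂^{⊗n} → (C₁ ⊗ C₂)^{⊗n}`,
`(c₁⊗…⊗cₙ) ⊗ (d₁⊗…⊗dₙ) ↦ ± (c₁⊗d₁) ⊗ … ⊗ (cₙ⊗dₙ)` with the Koszul shuffle sign, is a chain
map and is `Sₙ`-equivariant for the signed permutation actions.  Both claims are stated on
elementary tensors of homogeneous elements `c i` (degrees `dc i`) and `d i` (degrees `dd i`):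
the first conjunct equates `∂((C₁⊗C₂)^{⊗n})` applied to `Vₙ(c ⊗ d)` with `Vₙ` applied to
`∂(c ⊗ d)` (Koszul differentials throughout); the second equates the signed `σ`-action on
`Vₙ(c ⊗ d)` with `Vₙ(σ·c ⊗ σ·d)`. -/
theorem stmt16 (n : ℕ) {C₁ C₂ : Type*} [AddCommGroup C₁] [AddCommGroup C₂]
    [Module ℤ C₁] [Module ℤ C₂]
    (A₁ : ℤ → Submodule ℤ C₁) (A₂ : ℤ → Submodule ℤ C₂)
    (d₁ : C₁ →ₗ[ℤ] C₁) (d₂ : C₂ →ₗ[ℤ] C₂)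
    (hd₁ : ∀ (e : ℤ) (x : C₁), x ∈ A₁ e → d₁ x ∈ A₁ (e - 1))
    (hd₂ : ∀ (e : ℤ) (x : C₂), x ∈ A₂ e → d₂ x ∈ A₂ (e - 1))
    (c : Fin n → C₁) (dc : Fin n → ℤ) (hc : ∀ i, c i ∈ A₁ (dc i))
    (d : Fin n → C₂) (dd : Fin n → ℤ) (hd : ∀ i, d i ∈ A₂ (dd i)) :
    -- (1) Vₙ is a chain map:  ∂(Vₙ(c ⊗ d)) = Vₙ(∂(c ⊗ d)) :
    ((∑ k : Fin n,
        (sgn (∑ l : Fin n, if l < k then dc l + dd l else 0) * sgn (shuffleSign n dc dd)) •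
          (tprod ℤ (s := fun _ : Fin n => C₁ ⊗[ℤ] C₂))
            (Function.update (fun i => c i ⊗ₜ[ℤ] d i) k
              ((d₁ (c k)) ⊗ₜ[ℤ] (d k) + sgn (dc k) • ((c k) ⊗ₜ[ℤ] (d₂ (d k))))))
      = (∑ k : Fin n,
          (sgn (∑ l : Fin n, if l < k then dc l else 0) *
              sgn (shuffleSign n (Function.update dc k (dc k - 1)) dd)) •
            (tprod ℤ (s := fun _ : Fin n => C₁ ⊗[ℤ] C₂))
              (Function.update (fun i => c i ⊗ₜ[ℤ] d i) k ((d₁ (c k)) ⊗ₜ[ℤ] (d k))))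
        + ∑ k : Fin n,
            (sgn (∑ l : Fin n, dc l) * sgn (∑ l : Fin n, if l < k then dd l else 0) *
                sgn (shuffleSign n dc (Function.update dd k (dd k - 1)))) •
              (tprod ℤ (s := fun _ : Fin n => C₁ ⊗[ℤ] C₂))
                (Function.update (fun i => c i ⊗ₜ[ℤ] d i) k ((c k) ⊗ₜ[ℤ] (d₂ (d k)))))
    -- (2) Vₙ is Sₙ-equivariant:  σ · Vₙ(c ⊗ d) = Vₙ(σ·c ⊗ σ·d) :
    ∧ (∀ σ : Equiv.Perm (Fin n),
        (sgn (permSign n σ (fun i => dc i + dd i)) * sgn (shuffleSign n dc dd)) •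
            (tprod ℤ (s := fun _ : Fin n => C₁ ⊗[ℤ] C₂))
              (fun i => c (σ⁻¹ i) ⊗ₜ[ℤ] d (σ⁻¹ i))
          = (sgn (permSign n σ dc) * sgn (permSign n σ dd) *
                sgn (∑ i : Fin n, ∑ j : Fin n, if i < j then dd (σ⁻¹ i) * dc (σ⁻¹ j) else 0)) •
              (tprod ℤ (s := fun _ : Fin n => C₁ ⊗[ℤ] C₂))
                (fun i => c (σ⁻¹ i) ⊗ₜ[ℤ] d (σ⁻¹ i))) :=
  stmt16_general n d₁ d₂ c dc d dd
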